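/- Let p be a prime and let R = ℤ × ℤ be the ring with componentwise addition and componentwise multiplication. For N ≥ 0, let b_{p^N} denote the number of subrings of R of additive index p^N (each finite). Then in the formal power series ring ℤ⟦X⟧, (1 − X)(1 − pX³) · ∑_{N≥0} b_{p^N} X^N = (1 + X)². (Equivalently, ζ_{R,p}(s) = (1+p^{−s})² / ((1−p^{−s})(1−p^{1−3s})) for every prime p.) -/

import Mathlib

/-! A subgroup of finite index of `ℤ²` has a unique Hermite normal form
`{(a t, b t + c s) : t, s ∈ ℤ}` with `a, c > 0` and `0 ≤ b < c`; its index is `a c`, and it is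
closed under the componentwise product iff `c ∣ b (b - a)`, the condition for `(a, b)² ∈ H`.
Hence `b_{p^N} = ∑_{j ≤ N} g(N - j, j)`, where `g(i, j)` counts the residues `x` modulo `p^j`
with `x (x - p^i) ≡ 0`. For `i, j > 0` every such `x` is divisible by `p`, which gives
`g(i + 1, j + 2) = p g(i, j)`; together with `g(i, 0) = g(i + 1, 1) = 1` and `g(0, j + 1) = 2`
this yields `b_{p^(N+3)} = 4 + p b_{p^N}` and `b_1, b_p, b_{p²} = 1, 3, 4`. -/

open PowerSeries

/-- The number of subrings (additive subgroups closed under the componentwise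
multiplication, no unit required) of the ring `ℤ × ℤ` of additive index `p^N`. -/
noncomputable def zxzSubringCount (p N : ℕ) : ℕ :=
  Nat.card {H : NonUnitalSubring (ℤ × ℤ) // H.toAddSubgroup.index = p ^ N}

open Finset Module

namespace Nat

variable {P : ℕ → Prop} [DecidablePred P]

theorem count_mul_of_periodic {m : ℕ} (hP : Function.Periodic P m) (k : ℕ) :
    count P (k * m) = k * count P m := by
  induction k with
  | zero => simp
  | succ k ih =>
    rw [succ_mul, count_add, ih, succ_mul]
    congr 2
    ext x
    rw [add_comm]
    exact iff_of_eq (hP.nat_mul k x)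

theorem count_mul_of_forall_dvd {m : ℕ} (hm : m ≠ 0) (hP : ∀ b, P b → m ∣ b) (M : ℕ) :
    count P (m * M) = count (fun b => P (m * b)) M := by
  rw [count_eq_card_filter_range, count_eq_card_filter_range, eq_comm,
    ← card_map ⟨(m * ·), mul_right_injective₀ hm⟩]
  congr 1
  ext b
  simp only [mem_filter, mem_range, mem_map, Function.Embedding.coeFn_mk]
  constructor
  · rintro ⟨b, ⟨hb, hPb⟩, rfl⟩
    exact ⟨(Nat.mul_lt_mul_left (Nat.pos_of_ne_zero hm)).2 hb, hPb⟩
  · rintro ⟨hb, hPb⟩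
    obtain ⟨b, rfl⟩ := hP _ hPb
    exact ⟨b, ⟨(Nat.mul_lt_mul_left (Nat.pos_of_ne_zero hm)).1 hb, hPb⟩, rfl⟩

end Nat

theorem PowerSeries.one_sub_X_mul_one_sub_C_mul_X_pow_three_mul_mk {q : ℤ} {f : ℕ → ℤ}
    (h0 : f 0 = 1) (h1 : f 1 = 3) (h2 : f 2 = 4) (h : ∀ n, f (n + 3) = 4 + q * f n) :
    (1 - X) * (1 - C q * X ^ 3) * mk f = (1 + X) ^ 2 := by
  have expand : (1 - X) * (1 - C q * X ^ 3) * mk f =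
      mk f - X ^ 1 * mk f - C q * (X ^ 3 * mk f) + C q * (X ^ 4 * mk f) := by ring
  have square : (1 + X : ℤ⟦X⟧) ^ 2 = X ^ 0 + C 2 * X ^ 1 + X ^ 2 := by
    rw [map_ofNat C 2]
    ring
  rw [expand, square]
  ext n
  simp only [map_add, map_sub, coeff_C_mul, coeff_X_pow_mul', coeff_mk, coeff_X_pow]
  rcases n with _ | _ | _ | _ | n <;> simp [h0, h1, h2, h]

def hermiteMap (a b c : ℤ) : ℤ × ℤ →ₗ[ℤ] ℤ × ℤ :=
  (a • LinearMap.fst ℤ ℤ ℤ).prod (b • LinearMap.fst ℤ ℤ ℤ + c • LinearMap.snd ℤ ℤ ℤ)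

@[simp] lemma hermiteMap_apply (a b c : ℤ) (v : ℤ × ℤ) :
    hermiteMap a b c v = (a * v.1, b * v.1 + c * v.2) := rfl

def hermiteLattice (a b c : ℤ) : AddSubgroup (ℤ × ℤ) :=
  (LinearMap.range (hermiteMap a b c)).toAddSubgroup

section HermiteLattice

variable {a b c : ℤ}

lemma mem_hermiteLattice {z : ℤ × ℤ} :
    z ∈ hermiteLattice a b c ↔ ∃ t, z.1 = a * t ∧ c ∣ z.2 - b * t := by
  constructor
  · rintro ⟨⟨t, s⟩, rfl⟩
    exact ⟨t, rfl, s, by simp⟩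
  · rintro ⟨t, h1, s, h2⟩
    exact ⟨(t, s), Prod.ext h1.symm (by simp only [hermiteMap_apply]; linarith)⟩

lemma mk_mem_hermiteLattice_self : (a, b) ∈ hermiteLattice a b c :=
  mem_hermiteLattice.2 ⟨1, by simp, by simp⟩

lemma zero_mk_mem_hermiteLattice_iff (ha : a ≠ 0) {y : ℤ} :
    (0, y) ∈ hermiteLattice a b c ↔ c ∣ y := by
  simp [mem_hermiteLattice, ha]

lemma hermiteMap_injective (ha : a ≠ 0) (hc : c ≠ 0) :
    Function.Injective (hermiteMap a b c) := by
  rintro ⟨t, s⟩ ⟨t', s'⟩ h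
  simp only [hermiteMap_apply, Prod.mk.injEq] at h
  obtain rfl : t = t' := mul_left_cancel₀ ha h.1
  exact Prod.ext rfl (mul_left_cancel₀ hc (by linarith [h.2]))

lemma index_hermiteLattice (ha : a ≠ 0) (hc : c ≠ 0) :
    (hermiteLattice a b c).index = (a * c).natAbs := by
  let e := LinearEquiv.ofInjective _ (hermiteMap_injective (b := b) ha hc)
  have h := Submodule.natAbs_det_basis_change (Basis.finTwoProd ℤ) _ ((Basis.finTwoProd ℤ).map e)
  simp [e, Basis.det_apply, Basis.toMatrix_apply, Matrix.det_fin_two] at h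
  exact (AddSubgroup.index_eq_card _).trans h.symm

lemma mul_mem_hermiteLattice (h : c ∣ b * (b - a)) {x y : ℤ × ℤ}
    (hx : x ∈ hermiteLattice a b c) (hy : y ∈ hermiteLattice a b c) :
    x * y ∈ hermiteLattice a b c := by
  obtain ⟨t, hx1, hx2⟩ := mem_hermiteLattice.1 hx
  obtain ⟨s, hy1, hy2⟩ := mem_hermiteLattice.1 hy
  refine mem_hermiteLattice.2 ⟨a * t * s, by simp only [Prod.fst_mul, hx1, hy1]; ring, ?_⟩
  have key : x.2 * y.2 - b * (a * t * s) =
      (x.2 - b * t) * y.2 + b * t * (y.2 - b * s) + t * s * (b * (b - a)) := by ring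
  simpa [key] using dvd_add (dvd_add (hx2.mul_right _) (hy2.mul_left _)) (h.mul_left _)

lemma dvd_of_mul_self_mem_hermiteLattice (ha : a ≠ 0)
    (h : (a, b) * (a, b) ∈ hermiteLattice a b c) : c ∣ b * (b - a) := by
  obtain ⟨t, ht1, ht2⟩ := mem_hermiteLattice.1 h
  obtain rfl : a = t := mul_left_cancel₀ ha ht1
  simpa [mul_sub, mul_comm] using ht2

def hermiteSubring (a b c : ℤ) (h : c ∣ b * (b - a)) : NonUnitalSubring (ℤ × ℤ) :=
  { hermiteLattice a b c with mul_mem' := mul_mem_hermiteLattice h }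

lemma hermiteSubring_toAddSubgroup (h : c ∣ b * (b - a)) :
    (hermiteSubring a b c h).toAddSubgroup = hermiteLattice a b c := rfl

end HermiteLattice

lemma eq_of_hermiteLattice_eq {a a' b b' c c' : ℕ} (ha : a ≠ 0) (ha' : a' ≠ 0) (hb : b < c)
    (hb' : b' < c') (h : hermiteLattice a b c = hermiteLattice a' b' c') :
    a = a' ∧ b = b' ∧ c = c' := by
  have hc : ∀ y : ℤ, (c : ℤ) ∣ y ↔ (c' : ℤ) ∣ y := fun y => by
    rw [← zero_mk_mem_hermiteLattice_iff (b := b) (Nat.cast_ne_zero.2 ha), h,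
      zero_mk_mem_hermiteLattice_iff (Nat.cast_ne_zero.2 ha')]
  obtain rfl : c = c' := Nat.dvd_antisymm (Int.natCast_dvd_natCast.1 ((hc _).2 dvd_rfl))
    (Int.natCast_dvd_natCast.1 ((hc _).1 dvd_rfl))
  have hmem : ((a : ℤ), (b : ℤ)) ∈ hermiteLattice a' b' c ∧
      ((a' : ℤ), (b' : ℤ)) ∈ hermiteLattice a b c :=
    ⟨h ▸ mk_mem_hermiteLattice_self, h ▸ mk_mem_hermiteLattice_self⟩
  obtain ⟨⟨t, ht, -⟩, ⟨s, hs, -⟩⟩ := And.imp mem_hermiteLattice.1 mem_hermiteLattice.1 hmem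
  obtain rfl : a = a' := Nat.dvd_antisymm (Int.natCast_dvd_natCast.1 ⟨s, hs⟩)
    (Int.natCast_dvd_natCast.1 ⟨t, ht⟩)
  obtain ⟨u, hu1, hu2⟩ := mem_hermiteLattice.1 hmem.1
  obtain rfl : u = 1 := by simpa [ha] using hu1
  have : (b : ℤ) - b' = 0 :=
    Int.eq_zero_of_abs_lt_dvd (by simpa using hu2) (by rw [abs_lt]; omega)
  omega

lemma AddSubgroup.exists_nat_mem_iff_dvd (K : AddSubgroup ℤ) :
    ∃ n : ℕ, ∀ x, x ∈ K ↔ (n : ℤ) ∣ x := by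
  obtain ⟨g, rfl⟩ := Int.subgroup_cyclic K
  exact ⟨g.natAbs, fun x => by
    rw [← AddSubgroup.zmultiples_eq_closure, Int.mem_zmultiples_iff, Int.natAbs_dvd]⟩

theorem AddSubgroup.exists_eq_hermiteLattice (H : AddSubgroup (ℤ × ℤ)) (hH : H.index ≠ 0) :
    ∃ a b c : ℕ, 0 < a ∧ b < c ∧ H = hermiteLattice a b c := by
  obtain ⟨a, ha⟩ := (H.map (AddMonoidHom.fst ℤ ℤ)).exists_nat_mem_iff_dvd
  obtain ⟨c, hc⟩ := (H.comap (AddMonoidHom.inr ℤ ℤ)).exists_nat_mem_iff_dvd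
  simp only [AddSubgroup.mem_map, AddMonoidHom.coe_fst, Prod.exists, exists_and_right,
    exists_eq_right, AddSubgroup.mem_comap, AddMonoidHom.inr_apply] at ha hc
  have hindex_dvd : (a : ℤ) ∣ H.index ∧ (c : ℤ) ∣ H.index := by
    refine ⟨(ha _).1 ⟨0, ?_⟩, (hc _).1 ?_⟩
    · simpa using H.nsmul_index_mem ((1 : ℤ), (0 : ℤ))
    · simpa using H.nsmul_index_mem ((0 : ℤ), (1 : ℤ))
  have ha0 : a ≠ 0 := by rintro rfl; simp_all
  have hc0 : (0 : ℤ) < c := by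
    have : c ≠ 0 := by rintro rfl; simp_all
    omega
  obtain ⟨y, hy⟩ := (ha a).2 dvd_rfl
  have hb : ((a : ℤ), y % c) ∈ H := by
    have : ((a : ℤ), y % c) = ((a : ℤ), y) - (y / c) • ((0 : ℤ), (c : ℤ)) := by
      ext <;> simp [Int.emod_def, mul_comm]
    rw [this]
    exact sub_mem hy (zsmul_mem ((hc _).2 dvd_rfl) _)
  have hb0 := Int.emod_nonneg y hc0.ne'
  have hbc := Int.emod_lt_of_pos y hc0
  refine ⟨a, (y % c).toNat, c, Nat.pos_of_ne_zero ha0, by omega, ?_⟩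
  ext z
  rw [mem_hermiteLattice, Int.toNat_of_nonneg hb0]
  constructor
  · intro hz
    obtain ⟨t, ht⟩ := (ha z.1).1 ⟨z.2, hz⟩
    refine ⟨t, ht, (hc _).1 ?_⟩
    have : ((0 : ℤ), z.2 - y % c * t) = z - t • ((a : ℤ), y % c) := by
      ext <;> simp [ht, mul_comm]
    rw [this]
    exact sub_mem hz (zsmul_mem hb t)
  · rintro ⟨t, ht, hdvd⟩
    have : z = t • ((a : ℤ), y % c) + ((0 : ℤ), z.2 - y % c * t) := by
      ext <;> simp [ht, mul_comm]
    rw [this]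
    exact add_mem (zsmul_mem hb t) ((hc _).2 hdvd)

theorem NonUnitalSubring.exists_eq_hermiteLattice (H : NonUnitalSubring (ℤ × ℤ)) {n : ℕ}
    (hH : H.toAddSubgroup.index = n) (hn : n ≠ 0) :
    ∃ c b : ℕ, c ∣ n ∧ b < c ∧ (c : ℤ) ∣ b * (b - ↑(n / c)) ∧
      H.toAddSubgroup = hermiteLattice ↑(n / c) b c := by
  obtain ⟨a, b, c, ha, hbc, hHL⟩ := H.toAddSubgroup.exists_eq_hermiteLattice (hH ▸ hn)
  have hac : a * c = n := by
    rw [← hH, hHL, index_hermiteLattice (by omega) (by omega)]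
    rfl
  obtain rfl : n / c = a := Nat.div_eq_of_eq_mul_left (by omega) hac.symm
  have hmem (z : ℤ × ℤ) : z ∈ H ↔ z ∈ hermiteLattice ↑(n / c) b c := by rw [← hHL]; rfl
  have hab := (hmem _).2 mk_mem_hermiteLattice_self
  exact ⟨c, b, Dvd.intro_left _ hac, hbc, dvd_of_mul_self_mem_hermiteLattice (by omega)
    ((hmem _).1 (H.mul_mem hab hab)), hHL⟩

theorem card_nonUnitalSubring_index_eq_sum (n : ℕ) (hn : n ≠ 0) :
    Nat.card {H : NonUnitalSubring (ℤ × ℤ) // H.toAddSubgroup.index = n} =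
      ∑ c ∈ n.divisors, Nat.count (fun b : ℕ => (c : ℤ) ∣ b * (b - ↑(n / c))) c := by
  let S := n.divisors.sigma fun c => (range c).filter fun b : ℕ => (c : ℤ) ∣ b * (b - ↑(n / c))
  have mem_S {x : Σ _ : ℕ, ℕ} :
      x ∈ S ↔ x.1 ∣ n ∧ x.2 < x.1 ∧ (x.1 : ℤ) ∣ (x.2 : ℤ) * (x.2 - ↑(n / x.1)) := by
    simp only [S, mem_sigma, Nat.mem_divisors, mem_filter, mem_range]
    tauto
  have hquot {c : ℕ} (hc : c ∣ n) : n / c ≠ 0 :=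
    Nat.div_ne_zero_iff_of_dvd hc |>.2 ⟨hn, ne_zero_of_dvd_ne_zero hn hc⟩
  let Φ : S → {H : NonUnitalSubring (ℤ × ℤ) // H.toAddSubgroup.index = n} := fun x =>
    ⟨hermiteSubring (n / x.1.1 : ℕ) x.1.2 x.1.1 (mem_S.1 x.2).2.2, by
      obtain ⟨hc, hb, -⟩ := mem_S.1 x.2
      rw [hermiteSubring_toAddSubgroup, index_hermiteLattice (by exact_mod_cast hquot hc)
        (by omega), ← Nat.cast_mul, Int.natAbs_natCast, Nat.div_mul_cancel hc]⟩
  have hΦ : Function.Bijective Φ := by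
    constructor
    · rintro ⟨⟨c, b⟩, hx⟩ ⟨⟨c', b'⟩, hy⟩ h
      obtain ⟨-, rfl, rfl⟩ := eq_of_hermiteLattice_eq (hquot (mem_S.1 hx).1)
        (hquot (mem_S.1 hy).1) (mem_S.1 hx).2.1 (mem_S.1 hy).2.1
        (congrArg (fun H => H.1.toAddSubgroup) h)
      rfl
    · rintro ⟨H, hH⟩
      obtain ⟨c, b, hcn, hbc, hcond, hHL⟩ := H.exists_eq_hermiteLattice hH hn
      exact ⟨⟨⟨c, b⟩, mem_S.2 ⟨hcn, hbc, hcond⟩⟩,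
        Subtype.ext (NonUnitalSubring.toAddSubgroup_injective hHL.symm)⟩
  rw [← Nat.card_congr (Equiv.ofBijective Φ hΦ), Nat.card_eq_fintype_card, Fintype.card_coe,
    card_sigma]
  simp [Nat.count_eq_card_filter_range]

def quadCongrCount (p i j : ℕ) : ℕ :=
  Nat.count (fun b : ℕ => (p : ℤ) ^ j ∣ b * (b - (p : ℤ) ^ i)) (p ^ j)

section QuadCongrCount

variable {p : ℕ}

theorem quadCongrCount_zero_right (p i : ℕ) : quadCongrCount p i 0 = 1 := by
  simp [quadCongrCount]

theorem quadCongrCount_zero_succ (hp : p.Prime) (j : ℕ) : quadCongrCount p 0 (j + 1) = 2 := by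
  have hp' : Prime (p : ℤ) := Nat.prime_iff_prime_int.1 hp
  have hpow : 1 < p ^ (j + 1) := Nat.one_lt_pow (by omega) hp.one_lt
  have key : ∀ b < p ^ (j + 1), (p : ℤ) ^ (j + 1) ∣ b * (b - (p : ℤ) ^ 0) ↔ b = 0 ∨ b = 1 := by
    intro b hb
    have hb' : (b : ℤ) < (p : ℤ) ^ (j + 1) := by exact_mod_cast hb
    rw [pow_zero]
    constructor
    · intro h
      by_cases hpb : (p : ℤ) ∣ b
      · have : ¬(p : ℤ) ∣ b - 1 := fun h' => hp'.not_dvd_one (by simpa using dvd_sub hpb h')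
        left
        exact_mod_cast Int.eq_zero_of_dvd_of_nonneg_of_lt (by omega) hb'
          (hp'.pow_dvd_of_dvd_mul_right _ this h)
      · right
        have hb0 : b ≠ 0 := by rintro rfl; simp at hpb
        have := Int.eq_zero_of_dvd_of_nonneg_of_lt (by omega) (by omega)
          (hp'.pow_dvd_of_dvd_mul_left _ hpb h)
        omega
    · rintro (rfl | rfl) <;> simp
  rw [quadCongrCount, Nat.count_eq_card_filter_range,
    filter_congr (fun b hb => key b (mem_range.1 hb))]
  have : (range (p ^ (j + 1))).filter (fun b => b = 0 ∨ b = 1) = {0, 1} := by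
    ext b
    simp only [mem_filter, mem_range, mem_insert, mem_singleton]
    omega
  rw [this, card_pair zero_ne_one]

lemma dvd_of_pow_dvd_mul_sub_pow (hp : p.Prime) {i j : ℕ} (hj : j ≠ 0) {b : ℕ}
    (h : (p : ℤ) ^ j ∣ b * (b - (p : ℤ) ^ (i + 1))) : p ∣ b := by
  have hp' : Prime (p : ℤ) := Nat.prime_iff_prime_int.1 hp
  rcases hp'.dvd_or_dvd ((dvd_pow_self _ hj).trans h) with h | h
  · exact_mod_cast h
  · have : (p : ℤ) ∣ b := by simpa using dvd_add h (dvd_pow_self (p : ℤ) i.succ_ne_zero)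
    exact_mod_cast this

theorem quadCongrCount_succ_one (hp : p.Prime) (i : ℕ) : quadCongrCount p (i + 1) 1 = 1 := by
  have := Nat.count_mul_of_forall_dvd hp.ne_zero
    (fun b hb => dvd_of_pow_dvd_mul_sub_pow hp (i := i) one_ne_zero hb) 1
  rw [mul_one] at this
  rw [quadCongrCount, pow_one p, this, Nat.count_one, if_pos (by simp)]

/-- Every solution is divisible by `p`; the quotients are the solutions in `[0, p^(j+1))` of the
congruence modulo `p^j`, which is periodic modulo `p^j`. -/
theorem quadCongrCount_succ_add_two (hp : p.Prime) (i j : ℕ) :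
    quadCongrCount p (i + 1) (j + 2) = p * quadCongrCount p i j := by
  have hp0 : (p : ℤ) ≠ 0 := by exact_mod_cast hp.ne_zero
  have hperiodic :
      Function.Periodic (fun b : ℕ => (p : ℤ) ^ j ∣ b * (b - (p : ℤ) ^ i)) (p ^ j) := by
    intro b
    simp only [Nat.cast_add, Nat.cast_pow, eq_iff_iff]
    rw [show ((b : ℤ) + p ^ j) * (b + p ^ j - p ^ i) =
      b * (b - p ^ i) + p ^ j * (2 * b + p ^ j - p ^ i) by ring]
    exact dvd_add_left (dvd_mul_right _ _)
  have hscale (b : ℕ) : (p : ℤ) ^ (j + 2) ∣ ↑(p * b) * (↑(p * b) - (p : ℤ) ^ (i + 1)) ↔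
      (p : ℤ) ^ j ∣ b * (b - (p : ℤ) ^ i) := by
    rw [show (p : ℤ) ^ (j + 2) = p ^ 2 * p ^ j by ring,
      show (↑(p * b) : ℤ) * (↑(p * b) - p ^ (i + 1)) = p ^ 2 * (b * (b - p ^ i)) by
        push_cast; ring]
    exact mul_dvd_mul_iff_left (pow_ne_zero 2 hp0)
  rw [quadCongrCount, pow_succ' p (j + 1), Nat.count_mul_of_forall_dvd hp.ne_zero
    (fun b hb => dvd_of_pow_dvd_mul_sub_pow hp (by omega) hb)]
  simp_rw [hscale]
  rw [pow_succ', Nat.count_mul_of_periodic hperiodic, quadCongrCount]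

end QuadCongrCount

section PrimePower

variable {p : ℕ}

theorem zxzSubringCount_eq_sum (hp : p.Prime) (N : ℕ) :
    zxzSubringCount p N = ∑ j ∈ range (N + 1), quadCongrCount p (N - j) j := by
  rw [zxzSubringCount, card_nonUnitalSubring_index_eq_sum _ (pow_ne_zero _ hp.ne_zero),
    Nat.divisors_prime_pow hp, sum_map]
  refine sum_congr rfl fun j hj => ?_
  simp only [Function.Embedding.coeFn_mk, quadCongrCount,
    Nat.pow_div (Nat.lt_succ_iff.1 (mem_range.1 hj)) hp.pos, Nat.cast_pow]

theorem zxzSubringCount_add_three (hp : p.Prime) (N : ℕ) :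
    zxzSubringCount p (N + 3) = 4 + p * zxzSubringCount p N := by
  have hmid : ∀ k ∈ range (N + 1),
      quadCongrCount p (N + 3 - (k + 1 + 1)) (k + 1 + 1) = p * quadCongrCount p (N - k) k := by
    intro k hk
    rw [show N + 3 - (k + 1 + 1) = N - k + 1 by have := mem_range.1 hk; omega]
    exact quadCongrCount_succ_add_two hp _ _
  rw [zxzSubringCount_eq_sum hp, zxzSubringCount_eq_sum hp, sum_range_succ, sum_range_succ',
    sum_range_succ', sum_congr rfl hmid, ← mul_sum, Nat.sub_self, quadCongrCount_zero_succ hp,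
    show N + 3 - (0 + 1) = N + 1 + 1 from rfl, quadCongrCount_succ_one hp,
    quadCongrCount_zero_right]
  ring

end PrimePower

/-- For the ring `R = ℤ × ℤ` with componentwise operations and any prime `p`, the generating
function `∑_N b_{p^N} X^N` counting subrings of `R` of additive index `p^N` satisfies, in
`ℤ⟦X⟧`, `(1 - X)(1 - pX³) · ∑_N b_{p^N} X^N = (1 + X)²`, i.e.
`ζ_{R,p}(s) = (1+p^{-s})²/((1-p^{-s})(1-p^{1-3s}))`. -/
theorem zxz_local_zeta_function (p : ℕ) (hp : p.Prime) :
    (1 - X) * (1 - C (p : ℤ) * X ^ 3) *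
        PowerSeries.mk (fun N => (zxzSubringCount p N : ℤ)) =
      (1 + X) ^ 2 := by
  refine one_sub_X_mul_one_sub_C_mul_X_pow_three_mul_mk ?_ ?_ ?_ fun N => ?_
  iterate 3
    simp [zxzSubringCount_eq_sum hp, sum_range_succ, quadCongrCount_zero_right,
      quadCongrCount_zero_succ hp, quadCongrCount_succ_one hp]
  simp [zxzSubringCount_add_three hp]
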